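/- arXiv:1410.6800 — 6 statements merged into one kernel-verified Lean document; each statement's English description precedes it below -/
import Mathlib

section
/- Let n be a positive natural number, let 𝓗 = 𝓗₁ ⊕ … ⊕ 𝓗ₙ be a Hilbert space direct sum of complex Hilbert spaces, let P be a positive bounded operator on 𝓗, and for each i let P_{ii} = ιᵢ* P ιᵢ be the compression of P to 𝓗ᵢ. Then ‖P‖ ≤ ∑_{i=1}^n ‖P_{ii}‖. -/
open scoped InnerProductSpace ComplexOrder

/-!
Since `P` is positive, `(x, y) ↦ ⟪P x, y⟫` is a semi-inner product, so Cauchy–Schwarz for it gives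
`|⟪P xᵢ, xⱼ⟫| ≤ ⟪P xᵢ, xᵢ⟫^½ ⟪P xⱼ, xⱼ⟫^½ ≤ ‖Pᵢᵢ‖^½ ‖xᵢ‖ ‖Pⱼⱼ‖^½ ‖xⱼ‖` for the components
`xᵢ = ιᵢ x`. Summing over `i, j` and applying Cauchy–Schwarz in `ℝⁿ` yields
`⟪P x, x⟫ ≤ (∑ᵢ ‖Pᵢᵢ‖) ‖x‖²`, and the norm of a positive operator is the supremum of its
quadratic form on the unit sphere.
-/

open RCLike

namespace ContinuousLinearMap

variable {𝕜 E : Type*} [RCLike 𝕜] [NormedAddCommGroup E] [InnerProductSpace 𝕜 E]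
  {T : E →L[𝕜] E}

theorem IsPositive.norm_inner_le_sqrt_mul_sqrt (hT : T.IsPositive) (x y : E) :
    ‖⟪T x, y⟫_𝕜‖ ≤ √(re ⟪T x, x⟫_𝕜) * √(re ⟪T y, y⟫_𝕜) := by
  let core : PreInnerProductSpace.Core 𝕜 E :=
    { inner a b := ⟪T a, b⟫_𝕜
      conj_inner_symm a b := by
        rw [inner_conj_symm, hT.inner_left_eq_inner_right]
      re_inner_nonneg := hT.re_inner_nonneg_left
      add_left a b z := by simp only [map_add, inner_add_left]
      smul_left a b r := by simp only [map_smul, inner_smul_left] }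
  have hcs := InnerProductSpace.Core.inner_mul_inner_self_le (c := core) x y
  change ‖⟪T x, y⟫_𝕜‖ * ‖⟪T y, x⟫_𝕜‖ ≤ re ⟪T x, x⟫_𝕜 * re ⟪T y, y⟫_𝕜 at hcs
  rw [hT.inner_left_eq_inner_right y x, norm_inner_symm y, ← sq] at hcs
  rw [← Real.sqrt_mul (hT.re_inner_nonneg_left x)]
  exact Real.le_sqrt_of_sq_le hcs

theorem IsPositive.re_inner_sum_le_sq (hT : T.IsPositive) {ι : Type*} (s : Finset ι)
    (v : ι → E) :
    re ⟪T (∑ i ∈ s, v i), ∑ i ∈ s, v i⟫_𝕜 ≤ (∑ i ∈ s, √(re ⟪T (v i), v i⟫_𝕜)) ^ 2 := by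
  simp only [map_sum, sum_inner, inner_sum, sq, Finset.sum_mul_sum]
  gcongr with i _ j _
  exact (re_le_norm _).trans ((hT.norm_inner_le_sqrt_mul_sqrt _ _).trans_eq (mul_comm _ _))

theorem IsPositive.re_inner_sum_le (hT : T.IsPositive) {ι : Type*} (s : Finset ι)
    (v : ι → E) (c : ι → ℝ) (hc₀ : ∀ i ∈ s, 0 ≤ c i)
    (hc : ∀ i ∈ s, re ⟪T (v i), v i⟫_𝕜 ≤ c i * ‖v i‖ ^ 2) :
    re ⟪T (∑ i ∈ s, v i), ∑ i ∈ s, v i⟫_𝕜 ≤ (∑ i ∈ s, c i) * ∑ i ∈ s, ‖v i‖ ^ 2 := by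
  calc re ⟪T (∑ i ∈ s, v i), ∑ i ∈ s, v i⟫_𝕜
      ≤ (∑ i ∈ s, √(re ⟪T (v i), v i⟫_𝕜)) ^ 2 := hT.re_inner_sum_le_sq s v
    _ ≤ (∑ i ∈ s, √(c i) * ‖v i‖) ^ 2 := by
      gcongr with i hi
      rw [← Real.sqrt_sq (norm_nonneg (v i)), ← Real.sqrt_mul (hc₀ i hi)]
      exact Real.sqrt_le_sqrt (hc i hi)
    _ ≤ (∑ i ∈ s, √(c i) ^ 2) * ∑ i ∈ s, ‖v i‖ ^ 2 := Finset.sum_mul_sq_le_sq_mul_sq _ _ _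
    _ = (∑ i ∈ s, c i) * ∑ i ∈ s, ‖v i‖ ^ 2 := by
      rw [Finset.sum_congr rfl fun i hi => Real.sq_sqrt (hc₀ i hi)]

theorem IsPositive.opNorm_le_of_re_inner_le (hT : T.IsPositive) {C : ℝ} (hC : 0 ≤ C)
    (h : ∀ x, re ⟪T x, x⟫_𝕜 ≤ C * ‖x‖ ^ 2) : ‖T‖ ≤ C := by
  rw [T.norm_eq_iSup_rayleighQuotient hT.isSymmetric]
  refine ciSup_le fun x => ?_
  have hx₀ := hT.re_inner_nonneg_left x
  rw [rayleighQuotient, reApplyInnerSelf_apply, abs_of_nonneg (by positivity)]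
  rcases eq_or_ne x 0 with rfl | hx
  · simpa using hC
  · rw [div_le_iff₀ (by positivity)]
    exact h x

theorem re_inner_apply_self_le (S : E →L[𝕜] E) (x : E) : re ⟪S x, x⟫_𝕜 ≤ ‖S‖ * ‖x‖ ^ 2 :=
  calc re ⟪S x, x⟫_𝕜 ≤ ‖S x‖ * ‖x‖ := re_inner_le_norm _ _
    _ ≤ ‖S‖ * ‖x‖ * ‖x‖ := by gcongr; exact S.le_opNorm x
    _ = ‖S‖ * ‖x‖ ^ 2 := by ring

end ContinuousLinearMap

theorem PiLp.sum_single {ι : Type*} [Fintype ι] [DecidableEq ι] (p : ENNReal) {β : ι → Type*}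
    [∀ i, AddCommGroup (β i)] (x : PiLp p β) :
    ∑ i, PiLp.single p i (x i) = x := by
  ext j
  simp only [WithLp.ofLp_sum, PiLp.ofLp_single, Finset.sum_apply, Finset.sum_pi_single,
    Finset.mem_univ, if_true]

theorem stmt_1_general (n : ℕ) (𝓗 : Fin n → Type*)
    [∀ i, NormedAddCommGroup (𝓗 i)] [∀ i, InnerProductSpace ℂ (𝓗 i)]
    (P : PiLp 2 𝓗 →L[ℂ] PiLp 2 𝓗)
    (hPsa : ∀ x y : PiLp 2 𝓗, ⟪P x, y⟫_ℂ = ⟪x, P y⟫_ℂ)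
    (hPpos : ∀ x : PiLp 2 𝓗, 0 ≤ ⟪P x, x⟫_ℂ)
    (Pii : ∀ i, 𝓗 i →L[ℂ] 𝓗 i)
    (hPii : ∀ i (x y : 𝓗 i), ⟪(Pii i) x, y⟫_ℂ =
      ⟪P ((WithLp.equiv 2 (∀ j, 𝓗 j)).symm (Pi.single i x)),
        (WithLp.equiv 2 (∀ j, 𝓗 j)).symm (Pi.single i y)⟫_ℂ) :
    ‖P‖ ≤ ∑ i, ‖Pii i‖ := by
  simp only [WithLp.equiv_symm_apply, PiLp.toLp_single] at hPii
  have hP : P.IsPositive := (P.isPositive_iff).2 ⟨hPsa, hPpos⟩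
  refine hP.opNorm_le_of_re_inner_le (by positivity) fun x => ?_
  have hdiag : ∀ i ∈ Finset.univ, re ⟪P (PiLp.single 2 i (x i)), PiLp.single 2 i (x i)⟫_ℂ ≤
      ‖Pii i‖ * ‖PiLp.single 2 i (x i)‖ ^ 2 := fun i _ => by
    rw [← hPii, PiLp.norm_single]
    exact (Pii i).re_inner_apply_self_le (x i)
  have hsum := hP.re_inner_sum_le Finset.univ _ _ (fun i _ => norm_nonneg (Pii i)) hdiag
  simpa only [PiLp.sum_single, PiLp.norm_single, ← PiLp.norm_sq_eq_of_L2] using hsum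

/-- **Corollary 1.2.** If `𝓗 = 𝓗₁ ⊕ … ⊕ 𝓗ₙ`, `P` is a positive bounded operator on `𝓗`,
and `P_{ii} = ιᵢ* P ιᵢ` is the compression of `P` to `𝓗ᵢ`, then `‖P‖ ≤ ∑ᵢ ‖P_{ii}‖`. -/
theorem stmt_1 (n : ℕ) (hn : 0 < n) (𝓗 : Fin n → Type*)
    [∀ i, NormedAddCommGroup (𝓗 i)] [∀ i, InnerProductSpace ℂ (𝓗 i)]
    [∀ i, CompleteSpace (𝓗 i)]
    (P : PiLp 2 𝓗 →L[ℂ] PiLp 2 𝓗)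
    (hPsa : ∀ x y : PiLp 2 𝓗, ⟪P x, y⟫_ℂ = ⟪x, P y⟫_ℂ)
    (hPpos : ∀ x : PiLp 2 𝓗, 0 ≤ ⟪P x, x⟫_ℂ)
    (Pii : ∀ i, 𝓗 i →L[ℂ] 𝓗 i)
    (hPii : ∀ i (x y : 𝓗 i), ⟪(Pii i) x, y⟫_ℂ =
      ⟪P ((WithLp.equiv 2 (∀ j, 𝓗 j)).symm (Pi.single i x)),
        (WithLp.equiv 2 (∀ j, 𝓗 j)).symm (Pi.single i y)⟫_ℂ) :
    ‖P‖ ≤ ∑ i, ‖Pii i‖ :=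
  stmt_1_general n 𝓗 P hPsa hPpos Pii hPii
end

section
/- Let A be a unital C*-algebra, let φ be a state on A, and let p₁, …, pₙ be mutually orthogonal projections in A (pᵢ* = pᵢ = pᵢ² and pᵢpⱼ = 0 for i ≠ j) with p = p₁ + … + pₙ. If φ is supported by p, i.e. φ(1 − p) = 0, then for every positive element a of A one has φ(a) ≤ ∑'ᵢ (1/φ(pᵢ)) φ(pᵢ a pᵢ), where the sum ∑' is taken over those indices i with φ(pᵢ) > 0. -/
/-!
Write `a = b⋆b`, `p = ∑ pᵢ`, `xᵢ = b pᵢ`, and let `‖x‖ = √(φ (x⋆x))` be the GNS seminorm of `φ`.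
By Cauchy–Schwarz, `φ` kills `(1 - p) y` and `y (1 - p)` because `φ (1 - p) = 0`, so
`φ a = φ (p a p) = ‖∑ xᵢ‖²`. The triangle inequality and the weighted Cauchy–Schwarz inequality give
`‖∑ xᵢ‖² ≤ (∑ φ pᵢ) (∑ ‖xᵢ‖² / φ pᵢ)`, where `∑ φ pᵢ = φ p = 1` and `‖xᵢ‖² = φ (pᵢ a pᵢ)`;
a term with `φ pᵢ = 0` has `xᵢ` of seminorm zero, again by Cauchy–Schwarz.
-/

open scoped ComplexOrder

namespace Finset

theorem sq_sum_le_sum_mul_sum_sq_div {ι : Type*} (s : Finset ι) {f g : ι → ℝ}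
    (hg : ∀ i ∈ s, 0 ≤ g i) (hfg : ∀ i ∈ s, g i = 0 → f i = 0) :
    (∑ i ∈ s, f i) ^ 2 ≤ (∑ i ∈ s, g i) * ∑ i ∈ s, f i ^ 2 / g i := by
  refine sum_sq_le_sum_mul_sum_of_sq_le_mul s hg
    (fun i hi ↦ div_nonneg (sq_nonneg _) (hg i hi)) fun i hi ↦ ?_
  rcases eq_or_ne (g i) 0 with h | h
  · simp [hfg i hi h, h]
  · rw [mul_div_cancel₀ _ h]

end Finset

section PositiveFunctional

variable {A : Type*} [Ring A] [StarRing A] [Algebra ℂ A] {φ : A →ₗ[ℂ] ℂ}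

theorem map_star_mul_self_eq_re (hφ : ∀ b : A, 0 ≤ φ (star b * b)) (x : A) :
    φ (star x * x) = (φ (star x * x)).re :=
  Complex.eq_re_of_ofReal_le (r := 0) (by exact_mod_cast hφ x)

variable [StarModule ℂ A]

theorem conj_map_star_mul (hφ : ∀ b : A, 0 ≤ φ (star b * b)) (x y : A) :
    starRingEnd ℂ (φ (star y * x)) = φ (star x * y) := by
  have him : ∀ z : A, (φ (star z * z)).im = 0 := fun z ↦ (Complex.nonneg_iff.1 (hφ z)).2.symm
  have him_add : ∀ u v : A, (φ (star u * v)).im + (φ (star v * u)).im = 0 := by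
    intro u v
    have h := him (u + v)
    simp only [star_add, add_mul, mul_add, map_add, Complex.add_im, him u, him v] at h
    linarith
  have hre : (φ (star x * y)).re = (φ (star y * x)).re := by
    have h := him_add x (Complex.I • y)
    simp only [star_smul, mul_smul_comm, smul_mul_assoc, map_smul, smul_eq_mul, Complex.mul_im,
      Complex.I_re, Complex.I_im, Complex.star_def, Complex.conj_I, Complex.neg_re,
      Complex.neg_im] at h
    linarith
  apply Complex.ext
  · simp [hre]
  · simp only [Complex.conj_im]
    linarith [him_add x y]

abbrev gnsPreInnerProductCore (hφ : ∀ b : A, 0 ≤ φ (star b * b)) :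
    PreInnerProductSpace.Core ℂ A where
  inner x y := φ (star x * y)
  conj_inner_symm x y := conj_map_star_mul hφ x y
  re_inner_nonneg x := (Complex.nonneg_iff.1 (hφ x)).1
  add_left x y z := by simp only [star_add, add_mul, map_add]
  smul_left x y r := by simp only [star_smul, smul_mul_assoc, map_smul, smul_eq_mul]; rfl

theorem norm_map_star_mul_sq_le (hφ : ∀ b : A, 0 ≤ φ (star b * b)) (x y : A) :
    ‖φ (star x * y)‖ ^ 2 ≤ (φ (star x * x)).re * (φ (star y * y)).re := by
  let _ := gnsPreInnerProductCore hφ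
  let _ : Inner ℂ A := InnerProductSpace.Core.toPreInner'
  have h := InnerProductSpace.Core.inner_mul_inner_self_le (𝕜 := ℂ) x y
  rwa [InnerProductSpace.Core.norm_inner_symm (𝕜 := ℂ) y x, ← sq] at h

theorem re_map_star_mul_le (hφ : ∀ b : A, 0 ≤ φ (star b * b)) (x y : A) :
    (φ (star x * y)).re ≤ √(φ (star x * x)).re * √(φ (star y * y)).re := by
  rw [← Real.sqrt_mul (Complex.nonneg_iff.1 (hφ x)).1]
  exact (Complex.re_le_norm _).trans
    (Real.le_sqrt_of_sq_le (norm_map_star_mul_sq_le hφ x y))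

theorem map_star_mul_eq_zero_of_map_star_mul_self_eq_zero (hφ : ∀ b : A, 0 ≤ φ (star b * b))
    {x : A} (hx : φ (star x * x) = 0) (y : A) : φ (star x * y) = 0 := by
  have h := norm_map_star_mul_sq_le hφ x y
  rw [hx, Complex.zero_re, zero_mul] at h
  exact norm_eq_zero.1 (pow_eq_zero_iff two_ne_zero |>.1 (le_antisymm h (sq_nonneg _)))

theorem map_proj_mul_eq_zero (hφ : ∀ b : A, 0 ≤ φ (star b * b)) {p : A}
    (hp : IsStarProjection p) (h : φ p = 0) (y : A) : φ (p * y) = 0 := by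
  have hpp : φ (star p * p) = 0 := by
    rw [hp.isSelfAdjoint.star_eq, hp.isIdempotentElem.eq, h]
  simpa only [hp.isSelfAdjoint.star_eq] using
    map_star_mul_eq_zero_of_map_star_mul_self_eq_zero hφ hpp y

theorem map_mul_proj_eq_zero (hφ : ∀ b : A, 0 ≤ φ (star b * b)) {p : A}
    (hp : IsStarProjection p) (h : φ p = 0) (y : A) : φ (y * p) = 0 := by
  rw [← star_star y, ← conj_map_star_mul hφ, hp.isSelfAdjoint.star_eq,
    map_proj_mul_eq_zero hφ hp h, map_zero]

theorem map_eq_map_mul_mul_of_map_one_sub_eq_zero (hφ : ∀ b : A, 0 ≤ φ (star b * b))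
    {P : A} (hP : IsStarProjection P) (hsupp : φ (1 - P) = 0) (a : A) :
    φ a = φ (P * a * P) := by
  have hsplit : a = P * a * P + P * a * (1 - P) + (1 - P) * (a * P) + (1 - P) * (a * (1 - P)) := by
    noncomm_ring
  conv_lhs => rw [hsplit]
  simp only [map_add, map_proj_mul_eq_zero hφ hP.one_sub hsupp,
    map_mul_proj_eq_zero hφ hP.one_sub hsupp, add_zero]

theorem re_map_star_sum_mul_sum_le (hφ : ∀ b : A, 0 ≤ φ (star b * b)) {ι : Type*}
    (s : Finset ι) (x : ι → A) :
    (φ (star (∑ i ∈ s, x i) * ∑ i ∈ s, x i)).re ≤ (∑ i ∈ s, √(φ (star (x i) * x i)).re) ^ 2 := by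
  simp only [star_sum, Finset.sum_mul_sum, map_sum, Complex.re_sum, sq]
  gcongr with i _ j _
  exact re_map_star_mul_le hφ _ _

theorem re_map_star_sum_mul_sum_le_mul_sum_div (hφ : ∀ b : A, 0 ≤ φ (star b * b)) {ι : Type*}
    (s : Finset ι) (x : ι → A) {t : ι → ℝ} (ht : ∀ i ∈ s, 0 ≤ t i)
    (hxt : ∀ i ∈ s, t i = 0 → φ (star (x i) * x i) = 0) :
    (φ (star (∑ i ∈ s, x i) * ∑ i ∈ s, x i)).re ≤
      (∑ i ∈ s, t i) * ∑ i ∈ s, (φ (star (x i) * x i)).re / t i := by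
  refine (re_map_star_sum_mul_sum_le hφ s x).trans ?_
  have hsq : ∀ i, √(φ (star (x i) * x i)).re ^ 2 = (φ (star (x i) * x i)).re := fun i ↦
    Real.sq_sqrt (Complex.nonneg_iff.1 (hφ (x i))).1
  simpa only [hsq] using Finset.sq_sum_le_sum_mul_sum_sq_div s
    (f := fun i ↦ √(φ (star (x i) * x i)).re) ht fun i hi h0 ↦ by simp [hxt i hi h0]

end PositiveFunctional

theorem stmt_2_general {A : Type*} [NormedRing A] [StarRing A]
    [NormedAlgebra ℂ A] [StarModule ℂ A]
    (φ : A →ₗ[ℂ] ℂ) (hφpos : ∀ b : A, 0 ≤ φ (star b * b)) (hφ1 : φ 1 = 1)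
    (n : ℕ) (p : Fin n → A)
    (hsa : ∀ i, star (p i) = p i) (hidem : ∀ i, p i * p i = p i)
    (horth : ∀ i j, i ≠ j → p i * p j = 0)
    (hsupp : φ (1 - ∑ i, p i) = 0)
    (a : A) (ha : ∃ b : A, a = star b * b) :
    φ a ≤ ∑ i, (1 / φ (p i)) * φ (p i * a * p i) := by
  obtain ⟨b, rfl⟩ := ha
  have hP : IsStarProjection (∑ i, p i) :=
    ⟨OrthogonalIdempotents.isIdempotentElem_sum ⟨hidem, fun i j hij ↦ horth i j hij⟩,
      isSelfAdjoint_sum _ fun i _ ↦ hsa i⟩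
  set t : Fin n → ℝ := fun i ↦ (φ (p i)).re
  have ht : ∀ i, φ (p i) = t i := fun i ↦ by
    simpa only [hsa, hidem] using map_star_mul_self_eq_re hφpos (p i)
  have ht_nonneg : ∀ i, 0 ≤ t i := fun i ↦ by
    simpa only [hsa, hidem, ht, Complex.zero_le_real] using hφpos (p i)
  have ht_sum : ∑ i, t i = 1 := by
    rw [map_sub, sub_eq_zero, hφ1] at hsupp
    simp only [t, ← Complex.re_sum, ← map_sum, ← hsupp, Complex.one_re]
  have hcompress : ∀ i, p i * (star b * b) * p i = star (b * p i) * (b * p i) := fun i ↦ by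
    rw [star_mul, hsa]; noncomm_ring
  have hφb : φ (star b * b) = φ (star (∑ i, b * p i) * ∑ i, b * p i) := by
    rw [map_eq_map_mul_mul_of_map_one_sub_eq_zero hφpos hP hsupp, ← Finset.mul_sum, star_mul,
      hP.isSelfAdjoint.star_eq]
    simp only [mul_assoc]
  have key := re_map_star_sum_mul_sum_le_mul_sum_div hφpos Finset.univ (fun i ↦ b * p i)
    (fun i _ ↦ ht_nonneg i) fun i _ hi ↦ by
      rw [← hcompress, mul_assoc, map_proj_mul_eq_zero hφpos ⟨hidem i, hsa i⟩ (by rw [ht, hi]; simp)]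
  rw [ht_sum, one_mul, ← hφb] at key
  calc φ (star b * b) = ((φ (star b * b)).re : ℂ) := map_star_mul_self_eq_re hφpos b
    _ ≤ (∑ i, (φ (star (b * p i) * (b * p i))).re / t i : ℝ) := Complex.real_le_real.2 key
    _ = ∑ i, (1 / φ (p i)) * φ (p i * (star b * b) * p i) := by
      push_cast
      refine Finset.sum_congr rfl fun i _ ↦ ?_
      rw [hcompress, ht, ← map_star_mul_self_eq_re hφpos, div_eq_inv_mul, one_div]

/-- **Corollary 1.3.** Let `φ` be a state on a unital C*-algebra `A` and let
`p₁, …, pₙ` be mutually orthogonal projections in `A` with `p = p₁ + … + pₙ`.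
If `φ` is supported by `p`, i.e. `φ(1 - p) = 0`, then for every positive element `a`
of `A`, `φ(a) ≤ ∑'ᵢ (1/φ(pᵢ)) φ(pᵢ a pᵢ)`, the sum taken over those `i` with
`φ(pᵢ) > 0`.  (Here we use the convention `1/0 = 0` in `ℂ`, which has exactly the
effect of omitting the terms with `φ(pᵢ) = 0`.) -/
theorem stmt_2 {A : Type*} [NormedRing A] [StarRing A] [CStarRing A]
    [NormedAlgebra ℂ A] [StarModule ℂ A] [CompleteSpace A]
    (φ : A →ₗ[ℂ] ℂ) (hφpos : ∀ b : A, 0 ≤ φ (star b * b)) (hφ1 : φ 1 = 1)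
    (n : ℕ) (p : Fin n → A)
    (hsa : ∀ i, star (p i) = p i) (hidem : ∀ i, p i * p i = p i)
    (horth : ∀ i j, i ≠ j → p i * p j = 0)
    (hsupp : φ (1 - ∑ i, p i) = 0)
    (a : A) (ha : ∃ b : A, a = star b * b) :
    φ a ≤ ∑ i, (1 / φ (p i)) * φ (p i * a * p i) :=
  stmt_2_general φ hφpos hφ1 n p hsa hidem horth hsupp a ha
end

section
/- Let f be a convex continuous real-valued function on an interval I ⊆ ℝ, and let a, x₀, x, b ∈ I with a < x₀ < x < b. Then for every ε > 0 there exists a partition x₀ < x₁ < … < xₙ = x such that f'(xⱼ−) − f'(x_{j−1}+) < ε for j = 1, …, n, where f'(z−) and f'(z+) denote the left and right derivatives of f at z. -/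
/-!
On the interior of the interval, the right derivative `f'(u+)` tends to `f'(z-)` as `u → z⁻`
and the left derivative `f'(t-)` tends to `f'(z+)` as `t → z⁺`: one inequality is the
monotonicity of slopes, the other comes from bounding the one-sided derivatives at `u` by the
slope of a fixed secant through a point `w` near `z`, which depends continuously on `u`.
Hence the relation "`u < v` and `f'(v-) - f'(u+) < ε`" holds between `z` and all points just
to its right, and between all points just to its left and `z`. A supremum argument chains
such steps from `x₀` all the way to `x`.
-/

open Set Filter Topology SetRel

section RelSeries

variable {α : Type*} [ConditionallyCompleteLinearOrder α] [TopologicalSpace α] [OrderTopology α]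
  [DenselyOrdered α]

theorem RelSeries.exists_head_last_of_eventually {r : SetRel α α} {a b : α} (hab : a ≤ b)
    (hright : ∀ z ∈ Ico a b, ∀ᶠ t in 𝓝[>] z, z ~[r] t)
    (hleft : ∀ z ∈ Ioc a b, ∀ᶠ u in 𝓝[<] z, u ~[r] z) :
    ∃ p : RelSeries r, p.head = a ∧ p.last = b := by
  set S := {t ∈ Icc a b | ∃ p : RelSeries r, p.head = a ∧ p.last = t}
  have haS : a ∈ S := ⟨⟨le_rfl, hab⟩, RelSeries.singleton r a, rfl, rfl⟩
  have hbdd : BddAbove S := ⟨b, fun t ht ↦ ht.1.2⟩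
  set m := sSup S
  have ham : a ≤ m := le_csSup hbdd haS
  have hmb : m ≤ b := csSup_le ⟨a, haS⟩ fun t ht ↦ ht.1.2
  have hmS : m ∈ S := by
    refine ⟨⟨ham, hmb⟩, ?_⟩
    rcases ham.eq_or_lt with ham | ham
    · exact ⟨RelSeries.singleton r a, rfl, ham⟩
    obtain ⟨w, hwm, hw⟩ := (mem_nhdsLT_iff_exists_Ioo_subset' ham).1 (hleft m ⟨ham, hmb⟩)
    obtain ⟨u, huS, hwu⟩ := exists_lt_of_lt_csSup ⟨a, haS⟩ hwm
    obtain ⟨-, p, hp, rfl⟩ := id huS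
    rcases (le_csSup hbdd huS).eq_or_lt with hum | hum
    · exact ⟨p, hp, hum⟩
    · exact ⟨p.snoc m (hw ⟨hwu, hum⟩), by simpa using hp, by simp⟩
  obtain ⟨-, p, hp, hpm⟩ := hmS
  refine ⟨p, hp, hpm.trans (hmb.eq_or_lt.resolve_right fun hmb' ↦ ?_)⟩
  have : NeBot (𝓝[>] m) := nhdsGT_neBot_of_exists_gt ⟨b, hmb'⟩
  obtain ⟨t, hmt, htb⟩ := ((hright m ⟨ham, hmb'⟩).and (Ioo_mem_nhdsGT hmb')).exists
  exact (le_csSup hbdd ⟨⟨ham.trans htb.1.le, htb.2.le⟩, p.snoc t (hpm ▸ hmt), by simpa using hp,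
    by simp⟩).not_gt htb.1

end RelSeries

lemma ContinuousAt.slope {f : ℝ → ℝ} {w z : ℝ} (hf : ContinuousAt f z) (hzw : z ≠ w) :
    ContinuousAt (slope f w) z := by
  simp only [slope_fun_def_field]
  exact (hf.sub continuousAt_const).div (continuousAt_id.sub continuousAt_const)
    (sub_ne_zero.2 hzw)

namespace ConvexOn

variable {S : Set ℝ} {f : ℝ → ℝ} {z : ℝ}

lemma tendsto_rightDeriv_nhdsLT (hf : ConvexOn ℝ S f) (hz : z ∈ interior S) :
    Tendsto (fun u ↦ derivWithin f (Ioi u) u) (𝓝[<] z) (𝓝 (derivWithin f (Iio z) z)) := by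
  have hint : ∀ᶠ u in 𝓝[<] z, u ∈ interior S ∧ u < z :=
    (eventually_nhdsWithin_of_eventually_nhds (isOpen_interior.eventually_mem hz)).and
      self_mem_nhdsWithin
  refine tendsto_order.2 ⟨fun L hL ↦ ?_, fun L hL ↦ ?_⟩
  · have hslope := (hasDerivWithinAt_iff_tendsto_slope' self_notMem_Iio).1
      (hf.hasDerivWithinAt_leftDeriv_of_mem_interior hz)
    obtain ⟨w, hLw, hwS, hwz⟩ := ((hslope.eventually (eventually_gt_nhds hL)).and hint).exists
    have hcont : ContinuousAt (slope f w) z :=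
      (hf.continuousOn_interior.continuousAt (isOpen_interior.mem_nhds hz)).slope hwz.ne'
    rw [slope_comm] at hLw
    filter_upwards [(hcont.eventually (eventually_gt_nhds hLw)).filter_mono nhdsWithin_le_nhds,
      mem_nhdsWithin_of_mem_nhds (Ioi_mem_nhds hwz), hint] with u hLu hwu ⟨huS, _⟩
    calc L < slope f w u := hLu
      _ ≤ derivWithin f (Iio u) u :=
        hf.slope_le_leftDeriv_of_mem_interior (interior_subset hwS) huS hwu
      _ ≤ derivWithin f (Ioi u) u := hf.leftDeriv_le_rightDeriv_of_mem_interior huS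
  · filter_upwards [hint] with u ⟨huS, huz⟩
    calc derivWithin f (Ioi u) u ≤ slope f u z :=
          hf.rightDeriv_le_slope_of_mem_interior huS (interior_subset hz) huz
      _ ≤ derivWithin f (Iio z) z :=
        hf.slope_le_leftDeriv_of_mem_interior (interior_subset huS) hz huz
      _ < L := hL

lemma tendsto_leftDeriv_nhdsGT (hf : ConvexOn ℝ S f) (hz : z ∈ interior S) :
    Tendsto (fun t ↦ derivWithin f (Iio t) t) (𝓝[>] z) (𝓝 (derivWithin f (Ioi z) z)) := by
  have hint : ∀ᶠ t in 𝓝[>] z, t ∈ interior S ∧ z < t :=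
    (eventually_nhdsWithin_of_eventually_nhds (isOpen_interior.eventually_mem hz)).and
      self_mem_nhdsWithin
  refine tendsto_order.2 ⟨fun R hR ↦ ?_, fun R hR ↦ ?_⟩
  · filter_upwards [hint] with t ⟨htS, hzt⟩
    calc R < derivWithin f (Ioi z) z := hR
      _ ≤ slope f z t := hf.rightDeriv_le_slope_of_mem_interior hz (interior_subset htS) hzt
      _ ≤ derivWithin f (Iio t) t :=
        hf.slope_le_leftDeriv_of_mem_interior (interior_subset hz) htS hzt
  · have hslope := (hasDerivWithinAt_iff_tendsto_slope' self_notMem_Ioi).1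
      (hf.hasDerivWithinAt_rightDeriv_of_mem_interior hz)
    obtain ⟨v, hRv, hvS, hzv⟩ := ((hslope.eventually (eventually_lt_nhds hR)).and hint).exists
    have hcont : ContinuousAt (slope f v) z :=
      (hf.continuousOn_interior.continuousAt (isOpen_interior.mem_nhds hz)).slope hzv.ne
    rw [slope_comm] at hRv
    filter_upwards [(hcont.eventually (eventually_lt_nhds hRv)).filter_mono nhdsWithin_le_nhds,
      mem_nhdsWithin_of_mem_nhds (Iio_mem_nhds hzv), hint] with t hRt htv ⟨htS, _⟩
    calc derivWithin f (Iio t) t ≤ derivWithin f (Ioi t) t :=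
          hf.leftDeriv_le_rightDeriv_of_mem_interior htS
      _ ≤ slope f t v := hf.rightDeriv_le_slope_of_mem_interior htS (interior_subset hvS) htv
      _ = slope f v t := slope_comm f t v
      _ < R := hRt

end ConvexOn

theorem stmt_5_general (I : Set ℝ)
    (f : ℝ → ℝ) (hf : ConvexOn ℝ I f)
    (a x₀ x b : ℝ) (ha : a ∈ I) (hb : b ∈ I)
    (hax₀ : a < x₀) (hx₀x : x₀ < x) (hxb : x < b)
    (ε : ℝ) (hε : 0 < ε) :
    ∃ (n : ℕ) (xs : Fin (n + 1) → ℝ), StrictMono xs ∧ xs 0 = x₀ ∧ xs (Fin.last n) = x ∧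
      ∀ j : Fin n,
        derivWithin f (Set.Iio (xs j.succ)) (xs j.succ)
          - derivWithin f (Set.Ioi (xs j.castSucc)) (xs j.castSucc) < ε := by
  have hsub : Icc x₀ x ⊆ interior I := by
    refine (Icc_subset_Ioo hax₀ hxb).trans ?_
    rw [← interior_Icc]
    exact interior_mono (hf.1.ordConnected.out ha hb)
  let r : SetRel ℝ ℝ :=
    {p | p.1 < p.2 ∧ derivWithin f (Iio p.2) p.2 - derivWithin f (Ioi p.1) p.1 < ε}
  have hright : ∀ z ∈ Ico x₀ x, ∀ᶠ t in 𝓝[>] z, z ~[r] t := fun z hz ↦ by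
    filter_upwards [self_mem_nhdsWithin, (hf.tendsto_leftDeriv_nhdsGT
      (hsub (Ico_subset_Icc_self hz))).eventually (eventually_lt_nhds (lt_add_of_pos_right _ hε))]
      with t hzt ht
    exact ⟨hzt, sub_lt_iff_lt_add'.2 ht⟩
  have hleft : ∀ z ∈ Ioc x₀ x, ∀ᶠ u in 𝓝[<] z, u ~[r] z := fun z hz ↦ by
    filter_upwards [self_mem_nhdsWithin, (hf.tendsto_rightDeriv_nhdsLT
      (hsub (Ioc_subset_Icc_self hz))).eventually (eventually_gt_nhds (sub_lt_self _ hε))]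
      with u huz hu
    exact ⟨huz, sub_lt_comm.1 hu⟩
  obtain ⟨p, hp₀, hpx⟩ := RelSeries.exists_head_last_of_eventually hx₀x.le hright hleft
  exact ⟨p.length, p, Fin.strictMono_iff_lt_succ.2 fun j ↦ (p.step j).1, hp₀, hpx,
    fun j ↦ (p.step j).2⟩

/-- **Lemma 2.3.** Let `f` be a convex continuous function on an interval `I` and let
`a < x₀ < x < b` with `a, x₀, x, b ∈ I`.  For every `ε > 0` there is a partition
`x₀ < x₁ < … < xₙ = x` such that `f'(xⱼ−) − f'(x_{j−1}+) < ε` for `j = 1, …, n`.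
Here `f'(z−) = derivWithin f (Iio z) z` and `f'(z+) = derivWithin f (Ioi z) z` are the
one-sided derivatives. -/
theorem stmt_5 (I : Set ℝ) (hI : I.OrdConnected)
    (f : ℝ → ℝ) (hf : ConvexOn ℝ I f) (hfc : ContinuousOn f I)
    (a x₀ x b : ℝ) (ha : a ∈ I) (hx₀ : x₀ ∈ I) (hx : x ∈ I) (hb : b ∈ I)
    (hax₀ : a < x₀) (hx₀x : x₀ < x) (hxb : x < b)
    (ε : ℝ) (hε : 0 < ε) :
    ∃ (n : ℕ) (xs : Fin (n + 1) → ℝ), StrictMono xs ∧ xs 0 = x₀ ∧ xs (Fin.last n) = x ∧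
      ∀ j : Fin n,
        derivWithin f (Set.Iio (xs j.succ)) (xs j.succ)
          - derivWithin f (Set.Ioi (xs j.castSucc)) (xs j.castSucc) < ε :=
  stmt_5_general I f hf a x₀ x b ha hb hax₀ hx₀x hxb ε hε
end

section
/- Let f be a continuous real-valued function on a compact interval [a,b] which is neither strictly convex nor strictly concave on [a,b]. Then there exist a self-adjoint bounded operator H on the Hilbert space ℓ² (of square-summable complex sequences) and a sequence (Hₙ) of self-adjoint bounded operators on ℓ², with σ(H) ⊆ [a,b] and σ(Hₙ) ⊆ [a,b] for all n, such that (Hₙ) converges to H in the weak operator topology and (f(Hₙ)) converges to f(H) in the weak operator topology, but (Hₙ) does not converge to H in the strong operator topology. -/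
/-!
Since `f` is neither strictly convex nor strictly concave, some chord of `f` lies below the graph
at an interior point and some chord lies above it; moving the first configuration linearly to the
second and applying the intermediate value theorem gives `x ≠ y` and `t ∈ (0, 1)` with
`f (y + t (x - y)) = f y + t (f x - f y)`.

For an orthonormal sequence `(eₙ)`, let `P` be the projection onto `e₀` and `Qₙ` the projection
onto the unit vector `√t e₀ + √(1 - t) eₙ₊₁`; then `Qₙ → t P` weakly. The operators
`H = y + t (x - y) P` and `Hₙ = y + (x - y) Qₙ` have spectra in `{y, y + t (x - y)}` and `{y, x}`,
so `f (H) = f y + t (f x - f y) P` and `f (Hₙ) = f y + (f x - f y) Qₙ`, and both sequences converge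
weakly. A strong limit `S` of projections satisfies `⟪S v, v⟫ = ‖S v‖²`, which `t P` violates, so
`Hₙ ↛ H` strongly.
-/

open scoped InnerProductSpace
open Filter Topology Set InnerProductSpace

section Chords

variable {s : Set ℝ} {f : ℝ → ℝ}

theorem exists_chord_le_of_not_strictConvexOn (hs : Convex ℝ s) (h : ¬StrictConvexOn ℝ s f) :
    ∃ x ∈ s, ∃ y ∈ s, x < y ∧ ∃ t ∈ Ioo (0 : ℝ) 1, f y + t * (f x - f y) ≤ f (y + t * (x - y)) := by
  simp only [StrictConvexOn, hs, true_and, not_forall, not_lt, smul_eq_mul] at h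
  obtain ⟨x, hx, y, hy, hxy, t, u, ht, hu, htu, hle⟩ := h
  obtain rfl : u = 1 - t := by linarith
  rcases hxy.lt_or_gt with hxy | hxy
  · refine ⟨x, hx, y, hy, hxy, t, ⟨ht, by linarith⟩, ?_⟩
    rwa [show y + t * (x - y) = t * x + (1 - t) * y by ring,
      show f y + t * (f x - f y) = t * f x + (1 - t) * f y by ring]
  · refine ⟨y, hy, x, hx, hxy, 1 - t, ⟨hu, by linarith⟩, ?_⟩
    rwa [show x + (1 - t) * (y - x) = t * x + (1 - t) * y by ring,
      show f x + (1 - t) * (f y - f x) = t * f x + (1 - t) * f y by ring]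

theorem exists_eq_chord_of_not_strictConvexOn_of_not_strictConcaveOn (hs : Convex ℝ s)
    (hf : ContinuousOn f s) (hconv : ¬StrictConvexOn ℝ s f) (hconc : ¬StrictConcaveOn ℝ s f) :
    ∃ x ∈ s, ∃ y ∈ s, x < y ∧ ∃ t ∈ Ioo (0 : ℝ) 1,
      f (y + t * (x - y)) = f y + t * (f x - f y) := by
  obtain ⟨x₀, hx₀, y₀, hy₀, hxy₀, t₀, ht₀, hle₀⟩ := exists_chord_le_of_not_strictConvexOn hs hconv
  obtain ⟨x₁, hx₁, y₁, hy₁, hxy₁, t₁, ht₁, hle₁⟩ :=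
    exists_chord_le_of_not_strictConvexOn hs (neg_strictConvexOn_iff.not.mpr hconc)
  simp only [Pi.neg_apply] at hle₁
  let X : ℝ → ℝ := fun θ => x₀ + θ * (x₁ - x₀)
  let Y : ℝ → ℝ := fun θ => y₀ + θ * (y₁ - y₀)
  let T : ℝ → ℝ := fun θ => t₀ + θ * (t₁ - t₀)
  have hX : MapsTo X (Icc 0 1) s := fun θ hθ => hs.add_smul_sub_mem hx₀ hx₁ hθ
  have hY : MapsTo Y (Icc 0 1) s := fun θ hθ => hs.add_smul_sub_mem hy₀ hy₁ hθ
  have hT : MapsTo T (Icc 0 1) (Ioo 0 1) := fun θ hθ =>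
    (convex_Ioo (0 : ℝ) 1).add_smul_sub_mem ht₀ ht₁ hθ
  have hZ : MapsTo (fun θ => Y θ + T θ * (X θ - Y θ)) (Icc 0 1) s := fun θ hθ =>
    hs.add_smul_sub_mem (hY hθ) (hX hθ) (Ioo_subset_Icc_self (hT hθ))
  let φ : ℝ → ℝ := fun θ => f (Y θ + T θ * (X θ - Y θ)) - (f (Y θ) + T θ * (f (X θ) - f (Y θ)))
  have hφ : ContinuousOn φ (Icc 0 1) :=
    (hf.comp (by fun_prop) hZ).sub ((hf.comp (by fun_prop) hY).add
      ((continuous_const.add (continuous_id.mul continuous_const)).continuousOn.mul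
        ((hf.comp (by fun_prop) hX).sub (hf.comp (by fun_prop) hY))))
  have hφ₀ : 0 ≤ φ 0 := by simp only [φ, X, Y, T, zero_mul, add_zero]; linarith
  have hφ₁ : φ 1 ≤ 0 := by simp only [φ, X, Y, T, one_mul, add_sub_cancel]; linarith
  obtain ⟨θ, hθ, hφθ⟩ := intermediate_value_Icc' zero_le_one hφ ⟨hφ₁, hφ₀⟩
  refine ⟨X θ, hX hθ, Y θ, hY hθ, ?_, T θ, hT hθ, sub_eq_zero.mp hφθ⟩
  have hgap : 0 < (y₀ - x₀) + θ * ((y₁ - x₁) - (y₀ - x₀)) :=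
    (convex_Ioi (0 : ℝ)).add_smul_sub_mem (sub_pos.2 hxy₀) (sub_pos.2 hxy₁) hθ
  simp only [X, Y]
  linarith

end Chords

section AffineOfProjection

variable {A : Type*} [CStarAlgebra A] {p : A}

theorem IsSelfAdjoint.algebraMap_add_smul_eq_cfc (hp : IsSelfAdjoint p) (r s : ℝ) :
    algebraMap ℝ A r + s • p = cfc (fun t => r + s * t) p := by
  rw [cfc_const_add r (fun t => s * t) p, cfc_const_mul_id s p]

theorem IsSelfAdjoint.algebraMap_add_smul (hp : IsSelfAdjoint p) (r s : ℝ) :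
    IsSelfAdjoint (algebraMap ℝ A r + s • p) := by
  rw [hp.algebraMap_add_smul_eq_cfc]
  exact cfc_predicate _ _

theorem IsStarProjection.spectrum_algebraMap_add_smul_subset (hp : IsStarProjection p)
    (r s : ℝ) : spectrum ℝ (algebraMap ℝ A r + s • p) ⊆ {r, r + s} := by
  rw [hp.isSelfAdjoint.algebraMap_add_smul_eq_cfc, cfc_map_spectrum _ p hp.isSelfAdjoint]
  rintro _ ⟨t, ht, rfl⟩
  rcases hp.isIdempotentElem.spectrum_subset ℝ ht with rfl | rfl <;> simp

theorem IsStarProjection.cfc_algebraMap_add_smul (hp : IsStarProjection p) (f : ℝ → ℝ)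
    (r s : ℝ) :
    cfc f (algebraMap ℝ A r + s • p) = algebraMap ℝ A (f r) + (f (r + s) - f r) • p := by
  rw [hp.isSelfAdjoint.algebraMap_add_smul_eq_cfc, hp.isSelfAdjoint.algebraMap_add_smul_eq_cfc,
    ← cfc_comp' f _ p (((hp.isIdempotentElem.finite_spectrum ℝ).image _).continuousOn f)]
  refine cfc_congr fun t ht => ?_
  rcases hp.isIdempotentElem.spectrum_subset ℝ ht with rfl | rfl <;> simp

end AffineOfProjection

section HilbertSpace

variable {E : Type*} [NormedAddCommGroup E] [InnerProductSpace ℂ E]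
  {ι : Type*} {l : Filter ι}

theorem inner_algebraMap_add_smul_apply (r s : ℝ) (T : E →L[ℂ] E) (v w : E) :
    ⟪(algebraMap ℝ (E →L[ℂ] E) r + s • T) v, w⟫_ℂ = r * ⟪v, w⟫_ℂ + s * ⟪T v, w⟫_ℂ := by
  simp only [add_apply, smul_apply, ContinuousLinearMap.algebraMap_apply, inner_add_left,
    inner_smul_left_eq_smul, Complex.real_smul]

theorem Filter.Tendsto.inner_algebraMap_add_smul_apply {T : ι → E →L[ℂ] E} {S : E →L[ℂ] E}
    {v w : E} (h : Tendsto (fun n => ⟪T n v, w⟫_ℂ) l (𝓝 ⟪S v, w⟫_ℂ)) (r s : ℝ) :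
    Tendsto (fun n => ⟪(algebraMap ℝ (E →L[ℂ] E) r + s • T n) v, w⟫_ℂ) l
      (𝓝 ⟪(algebraMap ℝ (E →L[ℂ] E) r + s • S) v, w⟫_ℂ) := by
  simp only [_root_.inner_algebraMap_add_smul_apply]
  exact tendsto_const_nhds.add (h.const_mul _)

theorem tendsto_algebraMap_add_smul_apply_iff {T : ι → E →L[ℂ] E} {S : E →L[ℂ] E} {v : E}
    (r : ℝ) {s : ℝ} (hs : s ≠ 0) :
    Tendsto (fun n => (algebraMap ℝ (E →L[ℂ] E) r + s • T n) v) l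
      (𝓝 ((algebraMap ℝ (E →L[ℂ] E) r + s • S) v)) ↔ Tendsto (fun n => T n v) l (𝓝 (S v)) := by
  simp only [add_apply, smul_apply]
  rw [tendsto_const_add_iff, tendsto_const_smul_iff₀ hs]

theorem Orthonormal.tendsto_inner_atTop_zero {e : ℕ → E} (he : Orthonormal ℂ e) (z : E) :
    Tendsto (fun n => ⟪e n, z⟫_ℂ) atTop (𝓝 0) := by
  rw [tendsto_zero_iff_norm_tendsto_zero]
  simpa using (he.inner_products_summable (x := z)).tendsto_atTop_zero.sqrt

theorem Orthonormal.norm_smul_add_smul_sq {e : ι → E} (he : Orthonormal ℂ e) {i j : ι}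
    (hij : i ≠ j) (a b : ℂ) : ‖a • e i + b • e j‖ ^ 2 = ‖a‖ ^ 2 + ‖b‖ ^ 2 := by
  rw [sq, sq, sq, norm_add_sq_eq_norm_sq_add_norm_sq_of_inner_eq_zero _ _
      (by rw [inner_smul_left, inner_smul_right, he.2 hij, mul_zero, mul_zero]),
    norm_smul, norm_smul, he.1, he.1, mul_one, mul_one]

theorem tendsto_inner_rankOne_self_apply {u : ι → E} {u₀ : E}
    (hu : ∀ z, Tendsto (fun n => ⟪u n, z⟫_ℂ) l (𝓝 ⟪u₀, z⟫_ℂ)) (v w : E) :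
    Tendsto (fun n => ⟪rankOne ℂ (u n) (u n) v, w⟫_ℂ) l (𝓝 ⟪rankOne ℂ u₀ u₀ v, w⟫_ℂ) := by
  simp only [inner_left_rankOne_apply, ← inner_conj_symm v]
  exact ((Complex.continuous_conj.tendsto _).comp (hu v)).mul (hu w)

variable [CompleteSpace E]

theorem IsStarProjection.inner_apply_self {Q : E →L[ℂ] E} (hQ : IsStarProjection Q) (v : E) :
    ⟪Q v, v⟫_ℂ = (‖Q v‖ ^ 2 : ℝ) := by
  calc ⟪Q v, v⟫_ℂ = ⟪Q (Q v), v⟫_ℂ := by rw [← mul_apply_eq_comp, hQ.isIdempotentElem.eq]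
    _ = ⟪Q v, Q v⟫_ℂ := hQ.isSelfAdjoint.isSymmetric _ _
    _ = (‖Q v‖ ^ 2 : ℝ) := by rw [inner_self_eq_norm_sq_to_K]; push_cast; rfl

theorem inner_apply_self_eq_of_tendsto_isStarProjection [l.NeBot] {Q : ι → E →L[ℂ] E}
    (hQ : ∀ n, IsStarProjection (Q n)) {S : E →L[ℂ] E} {v : E}
    (h : Tendsto (fun n => Q n v) l (𝓝 (S v))) : ⟪S v, v⟫_ℂ = (‖S v‖ ^ 2 : ℝ) := by
  refine tendsto_nhds_unique (h.inner tendsto_const_nhds) ?_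
  simp only [(hQ _).inner_apply_self]
  exact Complex.continuous_ofReal.continuousAt.tendsto.comp (h.norm.pow 2)

theorem not_tendsto_isStarProjection_smul [l.NeBot] {Q : ι → E →L[ℂ] E}
    (hQ : ∀ n, IsStarProjection (Q n)) {P : E →L[ℂ] E} (hP : IsStarProjection P) (hP₀ : P ≠ 0)
    {t : ℝ} (ht : t ∈ Ioo (0 : ℝ) 1) : ¬∀ v, Tendsto (fun n => Q n v) l (𝓝 ((t • P) v)) := by
  intro h
  obtain ⟨v, hv⟩ : ∃ v, P v ≠ 0 := by
    by_contra! hP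
    exact hP₀ (ContinuousLinearMap.ext hP)
  have key := inner_apply_self_eq_of_tendsto_isStarProjection hQ (h v)
  rw [smul_apply, inner_smul_left_eq_smul, hP.inner_apply_self, norm_smul, Complex.real_smul,
    Real.norm_of_nonneg ht.1.le] at key
  norm_cast at key
  have hPv : 0 < ‖P v‖ ^ 2 := by positivity
  nlinarith [mul_pos (mul_pos ht.1 (sub_pos.2 ht.2)) hPv]

theorem Orthonormal.exists_isStarProjection_tendsto_inner_smul {e : ℕ → E}
    (he : Orthonormal ℂ e) {t : ℝ} (ht : t ∈ Icc (0 : ℝ) 1) :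
    ∃ (P : E →L[ℂ] E) (Q : ℕ → E →L[ℂ] E), IsStarProjection P ∧ P ≠ 0 ∧
      (∀ n, IsStarProjection (Q n)) ∧
      ∀ v w, Tendsto (fun n => ⟪Q n v, w⟫_ℂ) atTop (𝓝 ⟪(t • P) v, w⟫_ℂ) := by
  let u : ℕ → E := fun n => (√t : ℂ) • e 0 + (√(1 - t) : ℂ) • e (n + 1)
  have hu_norm : ∀ n, ‖u n‖ = 1 := fun n => by
    have := he.norm_smul_add_smul_sq n.succ_ne_zero.symm (√t : ℂ) (√(1 - t) : ℂ)
    simp only [Complex.norm_real, Real.norm_eq_abs, sq_abs, Real.sq_sqrt ht.1,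
      Real.sq_sqrt (sub_nonneg.2 ht.2), add_sub_cancel] at this
    exact (pow_eq_one_iff_of_nonneg (norm_nonneg _) two_ne_zero).1 this
  have hu_weak : ∀ z, Tendsto (fun n => ⟪u n, z⟫_ℂ) atTop (𝓝 ⟪(√t : ℂ) • e 0, z⟫_ℂ) := fun z => by
    simpa [u, inner_add_left] using tendsto_const_nhds.add
      (((he.tendsto_inner_atTop_zero z).comp (tendsto_add_atTop_nat 1)).const_mul _)
  refine ⟨rankOne ℂ (e 0) (e 0), fun n => rankOne ℂ (u n) (u n),
    isStarProjection_rankOne_self (he.1 0), rankOne_ne_zero (he.ne_zero 0) (he.ne_zero 0),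
    fun n => isStarProjection_rankOne_self (hu_norm n), fun v w => ?_⟩
  convert tendsto_inner_rankOne_self_apply hu_weak v w using 2
  simp only [smul_apply, inner_smul_left_eq_smul, Complex.real_smul, inner_left_rankOne_apply,
    inner_smul_left, inner_smul_right, Complex.conj_ofReal]
  have hsq : (√t : ℂ) * √t = t := by exact_mod_cast Real.mul_self_sqrt ht.1
  linear_combination (⟪v, e 0⟫_ℂ * ⟪e 0, w⟫_ℂ) * hsq.symm

theorem Orthonormal.exists_cfc_weak_tendsto_not_strong_tendsto {e : ℕ → E}
    (he : Orthonormal ℂ e) {s : Set ℝ} (hs : Convex ℝ s) {f : ℝ → ℝ} (hf : ContinuousOn f s)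
    (hconv : ¬StrictConvexOn ℝ s f) (hconc : ¬StrictConcaveOn ℝ s f) :
    ∃ (H : E →L[ℂ] E) (Hseq : ℕ → E →L[ℂ] E),
      IsSelfAdjoint H ∧ (∀ n, IsSelfAdjoint (Hseq n)) ∧
      spectrum ℝ H ⊆ s ∧ (∀ n, spectrum ℝ (Hseq n) ⊆ s) ∧
      (∀ v w, Tendsto (fun n => ⟪Hseq n v, w⟫_ℂ) atTop (𝓝 ⟪H v, w⟫_ℂ)) ∧
      (∀ v w, Tendsto (fun n => ⟪cfc f (Hseq n) v, w⟫_ℂ) atTop (𝓝 ⟪cfc f H v, w⟫_ℂ)) ∧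
      ¬∀ v, Tendsto (fun n => Hseq n v) atTop (𝓝 (H v)) := by
  obtain ⟨x, hx, y, hy, hxy, t, ht, hft⟩ :=
    exists_eq_chord_of_not_strictConvexOn_of_not_strictConcaveOn hs hf hconv hconc
  obtain ⟨P, Q, hP, hP₀, hQ, hQP⟩ :=
    he.exists_isStarProjection_tendsto_inner_smul (Ioo_subset_Icc_self ht)
  have hz : y + t * (x - y) ∈ s := hs.add_smul_sub_mem hy hx (Ioo_subset_Icc_self ht)
  have hH : (t * (x - y)) • P = (x - y) • (t • P) := by rw [mul_comm, mul_smul]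
  refine ⟨algebraMap ℝ _ y + (t * (x - y)) • P, fun n => algebraMap ℝ _ y + (x - y) • Q n,
    hP.isSelfAdjoint.algebraMap_add_smul _ _, fun n => (hQ n).isSelfAdjoint.algebraMap_add_smul _ _,
    (hP.spectrum_algebraMap_add_smul_subset _ _).trans (by simp [insert_subset_iff, hy, hz]),
    fun n => ((hQ n).spectrum_algebraMap_add_smul_subset _ _).trans
      (by simp [insert_subset_iff, hy, hx]), fun v w => ?_, fun v w => ?_, fun hHQ => ?_⟩
  · rw [hH]
    exact (hQP v w).inner_algebraMap_add_smul_apply y (x - y)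
  · simp only [hP.cfc_algebraMap_add_smul, (hQ _).cfc_algebraMap_add_smul, add_sub_cancel, hft,
      add_sub_cancel_left]
    rw [mul_comm t, mul_smul]
    exact (hQP v w).inner_algebraMap_add_smul_apply (f y) (f x - f y)
  · refine not_tendsto_isStarProjection_smul (l := atTop) hQ hP hP₀ ht fun v => ?_
    rw [← tendsto_algebraMap_add_smul_apply_iff y (sub_ne_zero.2 hxy.ne), ← hH]
    exact hHQ v

end HilbertSpace

theorem stmt_11_general (a b : ℝ) (f : ℝ → ℝ)
    (hfc : ContinuousOn f (Set.Icc a b))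
    (hnc : ¬ StrictConvexOn ℝ (Set.Icc a b) f)
    (hncc : ¬ StrictConcaveOn ℝ (Set.Icc a b) f) :
    ∃ (H : lp (fun _ : ℕ => ℂ) 2 →L[ℂ] lp (fun _ : ℕ => ℂ) 2)
      (Hseq : ℕ → (lp (fun _ : ℕ => ℂ) 2 →L[ℂ] lp (fun _ : ℕ => ℂ) 2)),
      IsSelfAdjoint H ∧ (∀ n, IsSelfAdjoint (Hseq n)) ∧
      spectrum ℝ H ⊆ Set.Icc a b ∧ (∀ n, spectrum ℝ (Hseq n) ⊆ Set.Icc a b) ∧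
      (∀ v w, Tendsto (fun n => ⟪(Hseq n) v, w⟫_ℂ) atTop (𝓝 ⟪H v, w⟫_ℂ)) ∧
      (∀ v w, Tendsto (fun n => ⟪(cfc (instCFC := IsSelfAdjoint.instContinuousFunctionalCalculus) f (Hseq n)) v, w⟫_ℂ) atTop
        (𝓝 ⟪(cfc (instCFC := IsSelfAdjoint.instContinuousFunctionalCalculus) f H) v, w⟫_ℂ)) ∧
      ¬ (∀ v, Tendsto (fun n => (Hseq n) v) atTop (𝓝 (H v))) :=
  (⟨LinearIsometryEquiv.refl ℂ _⟩ : HilbertBasis ℕ ℂ (lp (fun _ : ℕ => ℂ) 2)).orthonormal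
    |>.exists_cfc_weak_tendsto_not_strong_tendsto (convex_Icc a b) hfc hnc hncc

/-- **Proposition 2.10.** If `f` is continuous on `[a,b]` and neither strictly convex
nor strictly concave, then there are a self-adjoint bounded operator `H` on `ℓ²` and a
sequence `(Hₙ)` of self-adjoint bounded operators on `ℓ²`, all with spectra in `[a,b]`,
such that `(Hₙ) → H` and `(f(Hₙ)) → f(H)` in the weak operator topology, but
`(Hₙ) ↛ H` in the strong operator topology. -/
theorem stmt_11 (a b : ℝ) (hab : a ≤ b) (f : ℝ → ℝ)
    (hfc : ContinuousOn f (Set.Icc a b))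
    (hnc : ¬ StrictConvexOn ℝ (Set.Icc a b) f)
    (hncc : ¬ StrictConcaveOn ℝ (Set.Icc a b) f) :
    ∃ (H : lp (fun _ : ℕ => ℂ) 2 →L[ℂ] lp (fun _ : ℕ => ℂ) 2)
      (Hseq : ℕ → (lp (fun _ : ℕ => ℂ) 2 →L[ℂ] lp (fun _ : ℕ => ℂ) 2)),
      IsSelfAdjoint H ∧ (∀ n, IsSelfAdjoint (Hseq n)) ∧
      spectrum ℝ H ⊆ Set.Icc a b ∧ (∀ n, spectrum ℝ (Hseq n) ⊆ Set.Icc a b) ∧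
      (∀ v w, Tendsto (fun n => ⟪(Hseq n) v, w⟫_ℂ) atTop (𝓝 ⟪H v, w⟫_ℂ)) ∧
      (∀ v w, Tendsto (fun n => ⟪(cfc (instCFC := IsSelfAdjoint.instContinuousFunctionalCalculus) f (Hseq n)) v, w⟫_ℂ) atTop
        (𝓝 ⟪(cfc (instCFC := IsSelfAdjoint.instContinuousFunctionalCalculus) f H) v, w⟫_ℂ)) ∧
      ¬ (∀ v, Tendsto (fun n => (Hseq n) v) atTop (𝓝 (H v))) :=
  stmt_11_general a b f hfc hnc hncc
end

section
/- Let f be a continuous real-valued function on a compact interval [a,b], let x, y ∈ [a,b] with x < y, and let t ∈ (0,1) satisfy f(t x + (1−t) y) = t f(x) + (1−t) f(y). Define the 2×2 complex matrix H₀ = x·A + y·(1 − A), where A is the matrix with entries A₁₁ = t, A₁₂ = A₂₁ = √(t(1−t)), A₂₂ = 1−t. Then H₀ is self-adjoint, σ(H₀) = {x, y} ⊆ [a,b], the (1,2) entry of H₀ is nonzero, and the (1,1) entry of f(H₀) equals f((H₀)₁₁) = f(t x + (1−t) y). -/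
set_option synthInstance.maxHeartbeats 400000
set_option maxHeartbeats 800000

open Matrix

/-- The `2 × 2` matrix construction in the proof of Proposition 2.10.  If
`f(tx + (1−t)y) = t f(x) + (1−t) f(y)` with `x < y` in `[a,b]` and `t ∈ (0,1)`, and
`H₀ = x•A + y•(1 − A)` where `A` is the orthogonal projection onto the span of
`(√t, √(1−t))`, then `H₀` is self-adjoint, `σ(H₀) = {x, y}`, the `(1,2)` entry of `H₀`
is nonzero, `(H₀)₁₁ = tx + (1−t)y`, and the `(1,1)` entry of
`f(H₀) = f(x)•A + f(y)•(1 − A)` (the continuous functional calculus, computed via the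
spectral decomposition) equals `f(tx + (1−t)y) = f((H₀)₁₁)`. -/
theorem stmt_13 (a b x y t : ℝ) (f : ℝ → ℝ) (hfc : ContinuousOn f (Set.Icc a b))
    (hx : x ∈ Set.Icc a b) (hy : y ∈ Set.Icc a b) (hxy : x < y)
    (ht : t ∈ Set.Ioo (0 : ℝ) 1)
    (hft : f (t * x + (1 - t) * y) = t * f x + (1 - t) * f y)
    (A H₀ fH₀ : Matrix (Fin 2) (Fin 2) ℂ)
    (hA : A = !![(t : ℂ), ((Real.sqrt (t * (1 - t)) : ℝ) : ℂ);
                 ((Real.sqrt (t * (1 - t)) : ℝ) : ℂ), ((1 - t : ℝ) : ℂ)])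
    (hH₀ : H₀ = (x : ℂ) • A + (y : ℂ) • (1 - A))
    (hfH₀ : fH₀ = ((f x : ℝ) : ℂ) • A + ((f y : ℝ) : ℂ) • (1 - A)) :
    IsSelfAdjoint H₀ ∧ spectrum ℂ H₀ = {(x : ℂ), (y : ℂ)} ∧
      H₀ 0 1 ≠ 0 ∧ H₀ 0 0 = ((t * x + (1 - t) * y : ℝ) : ℂ) ∧
      fH₀ 0 0 = ((f (t * x + (1 - t) * y) : ℝ) : ℂ) := by
  obtain ⟨ht0, ht1⟩ := ht
  have hs0 : (0:ℝ) < t * (1 - t) := by nlinarith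
  have hsR : Real.sqrt (t * (1 - t)) ≠ 0 := by positivity
  have hs : ((Real.sqrt (t * (1 - t)) : ℝ) : ℂ) * ((Real.sqrt (t * (1 - t)) : ℝ) : ℂ)
      = (t : ℂ) * (1 - t) := by
    rw [← Complex.ofReal_mul, Real.mul_self_sqrt hs0.le]
    push_cast; ring
  refine ⟨?_, ?_, ?_, ?_, ?_⟩
  · -- self-adjoint
    rw [_root_.IsSelfAdjoint, Matrix.star_eq_conjTranspose]
    subst hH₀ hA
    ext i j
    fin_cases i <;> fin_cases j <;>
      simp [Matrix.conjTranspose_apply, Matrix.one_apply, ← Complex.ofReal_one,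
        ← Complex.ofReal_sub]
  · -- spectrum
    ext z
    rw [spectrum.mem_iff]
    have key : algebraMap ℂ (Matrix (Fin 2) (Fin 2) ℂ) z - H₀ =
        !![z - ((x:ℂ) * t + (y:ℂ) * (1 - t)), -(((x:ℂ) - y) * ((Real.sqrt (t * (1 - t)) : ℝ) : ℂ));
           -(((x:ℂ) - y) * ((Real.sqrt (t * (1 - t)) : ℝ) : ℂ)), z - ((x:ℂ) * (1 - t) + (y:ℂ) * t)] := by
      rw [hH₀, hA]
      ext i j
      fin_cases i <;> fin_cases j <;>
        simp [Matrix.algebraMap_matrix_apply, Matrix.one_apply] <;> push_cast <;> ring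
    rw [key, Matrix.isUnit_iff_isUnit_det]
    have hdet : (!![z - ((x:ℂ) * t + (y:ℂ) * (1 - t)), -(((x:ℂ) - y) * ((Real.sqrt (t * (1 - t)) : ℝ) : ℂ));
           -(((x:ℂ) - y) * ((Real.sqrt (t * (1 - t)) : ℝ) : ℂ)), z - ((x:ℂ) * (1 - t) + (y:ℂ) * t)]).det
        = (z - x) * (z - y) := by
      rw [Matrix.det_fin_two_of]
      linear_combination (-((x:ℂ) - y)^2) * hs
    rw [hdet]
    simp only [isUnit_iff_ne_zero, not_not, mul_eq_zero, sub_eq_zero]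
    simp [Set.mem_insert_iff]
  · -- H₀ 0 1 ≠ 0
    have : H₀ 0 1 = ((x:ℂ) - y) * ((Real.sqrt (t * (1 - t)) : ℝ) : ℂ) := by
      rw [hH₀, hA]; simp [Matrix.one_apply]; ring
    rw [this]
    apply mul_ne_zero
    · rw [sub_ne_zero]
      exact fun h => hxy.ne (Complex.ofReal_inj.mp h)
    · simpa using hsR
  ·rw [hH₀, hA]; simp [Matrix.one_apply]; push_cast; ring
  · rw [hfH₀, hA, hft]; simp [Matrix.one_apply]; push_cast; ring
end

section
/- Let 𝓗 be a complex Hilbert space, let (Hᵢ)_{i∈ι} be a net of self-adjoint bounded operators on 𝓗, and let H be a self-adjoint bounded operator on 𝓗. If (Hᵢ) converges in the strong operator topology to H, then for every bounded continuous function φ : ℝ → ℝ, the net (φ(Hᵢ)) converges in the strong operator topology to φ(H). -/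
/-!
Write `g = (1 + x²)⁻¹` and `k = x g`, both of sup norm at most `1`. For self-adjoint `a`, `b`,
`g(a) - g(b) = g(a) (b - a) k(b) + k(a) (b - a) g(b)`, so `H i → T` strongly gives
`g(H i) → g(T)` strongly, and then `k(H i) = g(H i) H i → k(T)`, with no uniform bound on the `H i`.

The bounded continuous `f` with `f(H i) → f(T)` strongly form a uniformly closed subalgebra.
By Stone–Weierstrass on the unit ball of `ℝ²`, which contains the image of `(g, k)`, it contains
`q ∘ (g, k)` for every continuous `q`. For bounded continuous `φ`, `q(s, t) = φ(t / s) s` is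
continuous (at `s = 0` since it is bounded by `‖φ‖ |s|`) and `q ∘ (g, k) = φ g`.
Since `φ(H i) g(H i) → φ(T) g(T)`, `g(H i) → g(T)` and `‖φ(H i)‖ ≤ ‖φ‖`, we get `φ(H i) → φ(T)`
on the range of `g(T)`, which is the whole space.
-/

open Filter Topology Metric
open scoped BoundedContinuousFunction

section StrongConvergence

variable {ι F : Type*} [SeminormedAddCommGroup F] {l : Filter ι}

lemma tendsto_of_norm_sub_le_add {x y z : ι → F} {x₀ y₀ z₀ : F} (C : ℝ)
    (h : ∀ i, ‖x i - x₀‖ ≤ C * ‖y i - y₀‖ + ‖z i - z₀‖)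
    (hy : Tendsto y l (𝓝 y₀)) (hz : Tendsto z l (𝓝 z₀)) : Tendsto x l (𝓝 x₀) := by
  rw [tendsto_iff_norm_sub_tendsto_zero] at hy hz ⊢
  exact squeeze_zero (fun _ => norm_nonneg _) h (by simpa using (hy.const_mul C).add hz)

variable {𝕜 E : Type*} [NontriviallyNormedField 𝕜] [SeminormedAddCommGroup E] [NormedSpace 𝕜 E]
  {A B : ι → E →L[𝕜] E} {a b : E →L[𝕜] E} {C : ℝ}

lemma tendsto_mul_apply_of_norm_le (hA : ∀ i, ‖A i‖ ≤ C)
    (hAa : ∀ v, Tendsto (fun i => A i v) l (𝓝 (a v)))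
    (hBb : ∀ v, Tendsto (fun i => B i v) l (𝓝 (b v))) (v : E) :
    Tendsto (fun i => (A i * B i) v) l (𝓝 ((a * b) v)) := by
  refine tendsto_of_norm_sub_le_add C (fun i => ?_) (hBb v) (hAa (b v))
  calc ‖(A i * B i) v - (a * b) v‖ = ‖A i (B i v - b v) + (A i (b v) - a (b v))‖ := by
        rw [map_sub, sub_add_sub_cancel, mul_apply_eq_comp, mul_apply_eq_comp]
    _ ≤ C * ‖B i v - b v‖ + ‖A i (b v) - a (b v)‖ :=
        (norm_add_le _ _).trans (add_le_add_left ((A i).le_of_opNorm_le (hA i) _) _)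

lemma tendsto_apply_of_tendsto_mul_apply (hA : ∀ i, ‖A i‖ ≤ C)
    (hABab : ∀ v, Tendsto (fun i => (A i * B i) v) l (𝓝 ((a * b) v)))
    (hBb : ∀ v, Tendsto (fun i => B i v) l (𝓝 (b v))) (v : E) :
    Tendsto (fun i => A i (b v)) l (𝓝 (a (b v))) := by
  refine tendsto_of_norm_sub_le_add C (fun i => ?_) (hBb v) (hABab v)
  calc ‖A i (b v) - a (b v)‖ = ‖A i (b v - B i v) + ((A i * B i) v - (a * b) v)‖ := by
        rw [map_sub, mul_apply_eq_comp, mul_apply_eq_comp, sub_add_sub_cancel]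
    _ ≤ C * ‖B i v - b v‖ + ‖(A i * B i) v - (a * b) v‖ := by
        rw [norm_sub_rev (B i v)]
        exact (norm_add_le _ _).trans (add_le_add_left ((A i).le_of_opNorm_le (hA i) _) _)

end StrongConvergence

lemma sub_eq_of_mul_one_add_sq {R : Type*} [Ring R] {a b x y : R} (ha : a * (1 + x ^ 2) = 1)
    (hb : (1 + y ^ 2) * b = 1) : a - b = a * (y - x) * (y * b) + a * x * (y - x) * b := by
  calc a - b = a * ((1 + y ^ 2) * b) - (a * (1 + x ^ 2)) * b := by rw [ha, hb, mul_one, one_mul]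
    _ = _ := by noncomm_ring

lemma continuous_inv_one_add_sq : Continuous fun x : ℝ => (1 + x ^ 2)⁻¹ :=
  (by fun_prop : Continuous fun x : ℝ => 1 + x ^ 2).inv₀ fun x => by positivity

noncomputable def invOneAddSq : ℝ →ᵇ ℝ :=
  .ofNormedAddCommGroup (fun x => (1 + x ^ 2)⁻¹) continuous_inv_one_add_sq 1 fun x => by
    rw [Real.norm_eq_abs, abs_of_pos (by positivity)]
    exact inv_le_one_of_one_le₀ (by nlinarith)

noncomputable def mulInvOneAddSq : ℝ →ᵇ ℝ :=
  .ofNormedAddCommGroup (fun x => x * (1 + x ^ 2)⁻¹) (continuous_id.mul continuous_inv_one_add_sq) 1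
    fun x => by
      rw [Real.norm_eq_abs, abs_mul, abs_of_pos (inv_pos.2 (by positivity : (0:ℝ) < 1 + x ^ 2)),
        ← div_eq_mul_inv, div_le_one (by positivity)]
      nlinarith [sq_abs x, abs_nonneg x]

lemma norm_invOneAddSq_le : ‖invOneAddSq‖ ≤ 1 :=
  BoundedContinuousFunction.norm_ofNormedAddCommGroup_le _ zero_le_one _
lemma norm_mulInvOneAddSq_le : ‖mulInvOneAddSq‖ ≤ 1 :=
  BoundedContinuousFunction.norm_ofNormedAddCommGroup_le _ zero_le_one _

section CStarAlgebra

variable {A : Type*} [CStarAlgebra A]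

lemma norm_cfc_le_norm (f : ℝ →ᵇ ℝ) (a : A) : ‖cfc f a‖ ≤ ‖f‖ :=
  norm_cfc_le (norm_nonneg f) fun x _ => f.norm_coe_le_norm x

lemma lipschitzWith_cfc (a : A) : LipschitzWith 1 fun f : ℝ →ᵇ ℝ => cfc f a :=
  LipschitzWith.of_dist_le_mul fun f g => by
    rw [NNReal.coe_one, one_mul, dist_eq_norm, dist_eq_norm, ← cfc_sub (⇑f) (⇑g) a]
    exact norm_cfc_le_norm (f - g) a

lemma cfc_coe_mul (f g : ℝ →ᵇ ℝ) (a : A) : cfc ⇑(f * g) a = cfc f a * cfc g a :=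
  cfc_mul (⇑f) (⇑g) a

lemma cfc_coe_add (f g : ℝ →ᵇ ℝ) (a : A) : cfc ⇑(f + g) a = cfc f a + cfc g a :=
  cfc_add a (⇑f) (⇑g)

variable {a b : A}

lemma cfc_one_add_sq (ha : IsSelfAdjoint a) : cfc (fun x : ℝ => 1 + x ^ 2) a = 1 + a ^ 2 := by
  rw [cfc_const_add 1 (fun x : ℝ => x ^ 2) a, cfc_pow_id a 2, map_one]

lemma cfc_invOneAddSq_mul (ha : IsSelfAdjoint a) : cfc invOneAddSq a * (1 + a ^ 2) = 1 := by
  rw [← cfc_one_add_sq ha, ← cfc_mul (⇑invOneAddSq) (fun x : ℝ => 1 + x ^ 2) a, ← cfc_one ℝ a]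
  exact cfc_congr fun x _ => inv_mul_cancel₀ (by positivity)

lemma mul_cfc_invOneAddSq (ha : IsSelfAdjoint a) : (1 + a ^ 2) * cfc invOneAddSq a = 1 := by
  rw [← cfc_one_add_sq ha, ← cfc_mul (fun x : ℝ => 1 + x ^ 2) (⇑invOneAddSq) a, ← cfc_one ℝ a]
  exact cfc_congr fun x _ => mul_inv_cancel₀ (by positivity)

lemma cfc_mulInvOneAddSq (ha : IsSelfAdjoint a) :
    cfc mulInvOneAddSq a = a * cfc invOneAddSq a := by
  have h := cfc_mul (fun x : ℝ => x) (⇑invOneAddSq) a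
  rwa [cfc_id' ℝ a] at h

lemma cfc_mulInvOneAddSq' (ha : IsSelfAdjoint a) :
    cfc mulInvOneAddSq a = cfc invOneAddSq a * a := by
  have h := cfc_mul (⇑invOneAddSq) (fun x : ℝ => x) a
  rw [cfc_id' ℝ a] at h
  exact (cfc_congr fun x _ => mul_comm _ _).trans h

lemma cfc_invOneAddSq_sub_cfc_invOneAddSq (ha : IsSelfAdjoint a) (hb : IsSelfAdjoint b) :
    cfc invOneAddSq a - cfc invOneAddSq b =
      cfc invOneAddSq a * (b - a) * cfc mulInvOneAddSq b +
        cfc mulInvOneAddSq a * (b - a) * cfc invOneAddSq b := by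
  rw [cfc_mulInvOneAddSq hb, cfc_mulInvOneAddSq' ha]
  exact sub_eq_of_mul_one_add_sq (cfc_invOneAddSq_mul ha) (mul_cfc_invOneAddSq hb)

end CStarAlgebra

lemma separatesPoints_adjoin_fst_snd (s : Set (ℝ × ℝ)) : Subalgebra.SeparatesPoints
    (Algebra.adjoin ℝ {ContinuousMap.fst.restrict s, ContinuousMap.snd.restrict s}) := by
  intro x y hxy
  by_cases h₁ : (x : ℝ × ℝ).1 = (y : ℝ × ℝ).1
  · have h₂ : (x : ℝ × ℝ).2 ≠ (y : ℝ × ℝ).2 := fun h₂ => hxy (Subtype.ext (Prod.ext h₁ h₂))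
    exact ⟨_, ⟨ContinuousMap.snd.restrict s, Algebra.subset_adjoin (by simp), rfl⟩, h₂⟩
  · exact ⟨_, ⟨ContinuousMap.fst.restrict s, Algebra.subset_adjoin (by simp), rfl⟩, h₁⟩

noncomputable def embedBall : C(ℝ, closedBall (0 : ℝ × ℝ) 1) where
  toFun x := ⟨(invOneAddSq x, mulInvOneAddSq x), by
    rw [mem_closedBall_zero_iff, Prod.norm_def, max_le_iff]
    exact ⟨(invOneAddSq.norm_coe_le_norm x).trans norm_invOneAddSq_le,
      (mulInvOneAddSq.norm_coe_le_norm x).trans norm_mulInvOneAddSq_le⟩⟩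
  continuous_toFun := by fun_prop

noncomputable def compEmbedBall : C(closedBall (0 : ℝ × ℝ) 1, ℝ) →ₐ[ℝ] ℝ →ᵇ ℝ where
  toFun q := (BoundedContinuousFunction.mkOfCompact q).compContinuous embedBall
  map_one' := rfl
  map_mul' _ _ := rfl
  map_zero' := rfl
  map_add' _ _ := rfl
  commutes' _ := rfl

lemma continuous_compEmbedBall : Continuous compEmbedBall :=
  (BoundedContinuousFunction.continuous_compContinuous embedBall).comp
    (ContinuousMap.isometryEquivBoundedOfCompact _ ℝ).continuous

lemma continuous_apply_div_mul (f : ℝ →ᵇ ℝ) : Continuous fun p : ℝ × ℝ => f (p.2 / p.1) * p.1 := by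
  refine continuous_iff_continuousAt.2 fun p => ?_
  by_cases hp : p.1 = 0
  · have hbound (q : ℝ × ℝ) : ‖f (q.2 / q.1) * q.1‖ ≤ ‖f‖ * ‖q.1‖ :=
      (norm_mul_le _ _).trans (mul_le_mul_of_nonneg_right (f.norm_coe_le_norm _) (norm_nonneg _))
    have hsmall : Tendsto (fun q : ℝ × ℝ => ‖f‖ * ‖q.1‖) (𝓝 p) (𝓝 0) := by
      have hcont : Continuous fun q : ℝ × ℝ => ‖f‖ * ‖q.1‖ := by fun_prop
      simpa [hp] using hcont.tendsto p
    rw [ContinuousAt, hp, mul_zero]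
    exact squeeze_zero_norm hbound hsmall
  · exact (f.continuous.continuousAt.comp (continuousAt_snd.div continuousAt_fst hp)).mul
      continuousAt_fst

lemma mul_invOneAddSq_mem_range_compEmbedBall (f : ℝ →ᵇ ℝ) :
    f * invOneAddSq ∈ compEmbedBall.range := by
  refine ⟨(ContinuousMap.mk _ (continuous_apply_div_mul f)).restrict _, ?_⟩
  ext x
  have hx : (1 + x ^ 2)⁻¹ ≠ 0 := by positivity
  show f (x * (1 + x ^ 2)⁻¹ / (1 + x ^ 2)⁻¹) * (1 + x ^ 2)⁻¹ = f x * (1 + x ^ 2)⁻¹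
  rw [mul_div_cancel_right₀ x hx]

section Operators

variable {𝓗 : Type*} [NormedAddCommGroup 𝓗] [InnerProductSpace ℂ 𝓗] [CompleteSpace 𝓗]
  {ι : Type*} {l : Filter ι} {H : ι → 𝓗 →L[ℂ] 𝓗} {T : 𝓗 →L[ℂ] 𝓗}
  (hH : ∀ i, IsSelfAdjoint (H i)) (hT : IsSelfAdjoint T)
  (hSOT : ∀ v, Tendsto (fun i => H i v) l (𝓝 (T v)))

variable (l H T) in
noncomputable def sotCfcSubalgebra : Subalgebra ℝ (ℝ →ᵇ ℝ) where
  carrier := {f | ∀ v, Tendsto (fun i => cfc f (H i) v) l (𝓝 (cfc f T v))}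
  mul_mem' {f g} hf hg v := by
    simp only [cfc_coe_mul]
    exact tendsto_mul_apply_of_norm_le (fun i => norm_cfc_le_norm f (H i)) hf hg v
  add_mem' {f g} hf hg v := by
    simpa only [cfc_coe_add, _root_.add_apply] using (hf v).add (hg v)
  algebraMap_mem' r v := by
    have hconst (S : 𝓗 →L[ℂ] 𝓗) (hS : IsSelfAdjoint S) :
        cfc (⇑(algebraMap ℝ (ℝ →ᵇ ℝ) r)) S = algebraMap ℝ _ r :=
      (cfc_congr fun x _ => by simp).trans (cfc_const r S hS)
    simp only [hconst _ (hH _), hconst T hT]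
    exact tendsto_const_nhds

variable (H) in
lemma tendstoUniformly_cfc_apply (f : ℝ →ᵇ ℝ) (v : 𝓗) :
    TendstoUniformly (fun (g : ℝ →ᵇ ℝ) i => cfc g (H i) v) (fun i => cfc f (H i) v) (𝓝 f) := by
  rw [Metric.tendstoUniformly_iff]
  intro ε hε
  have hsmall : Tendsto (fun g => dist g f * ‖v‖) (𝓝 f) (𝓝 0) := by
    have hcont : Continuous fun g : ℝ →ᵇ ℝ => dist g f * ‖v‖ := by fun_prop
    simpa using hcont.tendsto f
  filter_upwards [hsmall.eventually (gt_mem_nhds hε)] with g hg i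
  calc dist (cfc f (H i) v) (cfc g (H i) v) ≤ ‖cfc f (H i) - cfc g (H i)‖ * ‖v‖ := by
        rw [dist_eq_norm, ← sub_apply]
        exact (cfc f (H i) - cfc g (H i)).le_opNorm v
    _ ≤ dist g f * ‖v‖ := by
        rw [← dist_eq_norm, dist_comm]
        gcongr
        simpa using (lipschitzWith_cfc (H i)).dist_le_mul g f
    _ < ε := hg

include hH hT in
lemma isClosed_sotCfcSubalgebra : IsClosed (sotCfcSubalgebra l H T hH hT : Set (ℝ →ᵇ ℝ)) := by
  refine isClosed_of_closure_subset fun f hf v => ?_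
  set S : Set (ℝ →ᵇ ℝ) := (sotCfcSubalgebra l H T hH hT : Set (ℝ →ᵇ ℝ))
  have : (𝓝[S] f).NeBot := mem_closure_iff_nhdsWithin_neBot.1 hf
  refine (((tendstoUniformly_cfc_apply H f v).tendstoUniformlyOnFilter.mono_left
    (nhdsWithin_le_nhds (s := S))).mono_right le_top).tendsto_of_eventually_tendsto
    (eventually_nhdsWithin_of_forall fun g (hg : g ∈ S) => hg v) ?_
  exact (((lipschitzWith_cfc T).continuous.clm_apply continuous_const).tendsto f).mono_left
    nhdsWithin_le_nhds

lemma norm_cfc_apply_le_of_norm_le_one {f : ℝ →ᵇ ℝ} (hf : ‖f‖ ≤ 1) (S : 𝓗 →L[ℂ] 𝓗) (w : 𝓗) :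
    ‖cfc f S w‖ ≤ ‖w‖ := by
  simpa using (cfc f S).le_of_opNorm_le ((norm_cfc_le_norm f S).trans hf) w

include hSOT in
lemma invOneAddSq_mem_sotCfcSubalgebra : invOneAddSq ∈ sotCfcSubalgebra l H T hH hT := fun v => by
  set u₁ := cfc invOneAddSq T v
  set u₂ := cfc mulInvOneAddSq T v
  refine tendsto_of_norm_sub_le_add 1 (fun i => ?_) (hSOT u₂) (hSOT u₁)
  calc ‖cfc invOneAddSq (H i) v - cfc invOneAddSq T v‖
      = ‖cfc invOneAddSq (H i) ((T - H i) u₂) + cfc mulInvOneAddSq (H i) ((T - H i) u₁)‖ := by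
        rw [← sub_apply, cfc_invOneAddSq_sub_cfc_invOneAddSq (hH i) hT]; rfl
    _ ≤ ‖(T - H i) u₂‖ + ‖(T - H i) u₁‖ :=
        norm_add_le_of_le (norm_cfc_apply_le_of_norm_le_one norm_invOneAddSq_le _ _)
          (norm_cfc_apply_le_of_norm_le_one norm_mulInvOneAddSq_le _ _)
    _ = 1 * ‖H i u₂ - T u₂‖ + ‖H i u₁ - T u₁‖ := by
        rw [one_mul, sub_apply, sub_apply, norm_sub_rev, norm_sub_rev (T u₁)]

include hSOT in
lemma mulInvOneAddSq_mem_sotCfcSubalgebra : mulInvOneAddSq ∈ sotCfcSubalgebra l H T hH hT :=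
  fun v => by
  simp only [cfc_mulInvOneAddSq' (hH _), cfc_mulInvOneAddSq' hT]
  exact tendsto_mul_apply_of_norm_le (fun i => (norm_cfc_le_norm _ _).trans norm_invOneAddSq_le)
    (invOneAddSq_mem_sotCfcSubalgebra hH hT hSOT) hSOT v

include hSOT in
lemma range_compEmbedBall_le_sotCfcSubalgebra :
    compEmbedBall.range ≤ sotCfcSubalgebra l H T hH hT := by
  rintro _ ⟨q, rfl⟩
  have hgen : Algebra.adjoin ℝ {ContinuousMap.fst.restrict _, ContinuousMap.snd.restrict _} ≤
      (sotCfcSubalgebra l H T hH hT).comap compEmbedBall :=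
    Algebra.adjoin_le <| by
      rintro _ (rfl | rfl)
      exacts [invOneAddSq_mem_sotCfcSubalgebra hH hT hSOT,
        mulInvOneAddSq_mem_sotCfcSubalgebra hH hT hSOT]
  have hclosed := (isClosed_sotCfcSubalgebra (l := l) hH hT).preimage continuous_compEmbedBall
  have hdense := Subalgebra.topologicalClosure_minimal hgen hclosed
  rw [ContinuousMap.subalgebra_topologicalClosure_eq_top_of_separatesPoints _
    (separatesPoints_adjoin_fst_snd _)] at hdense
  exact hdense Algebra.mem_top

include hT in
lemma surjective_cfc_invOneAddSq : Function.Surjective ⇑(cfc invOneAddSq T) := fun v =>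
  ⟨((1 : 𝓗 →L[ℂ] 𝓗) + T ^ 2) v, by
    rw [← mul_apply_eq_comp, cfc_invOneAddSq_mul hT, one_apply_eq_self]⟩

include hH hT in
lemma mem_sotCfcSubalgebra_of_mul_mem {f g : ℝ →ᵇ ℝ} (hg : g ∈ sotCfcSubalgebra l H T hH hT)
    (hgT : Function.Surjective ⇑(cfc g T)) (hfg : f * g ∈ sotCfcSubalgebra l H T hH hT) :
    f ∈ sotCfcSubalgebra l H T hH hT := by
  intro v
  obtain ⟨w, rfl⟩ := hgT v
  refine tendsto_apply_of_tendsto_mul_apply (fun i => norm_cfc_le_norm f (H i)) (fun u => ?_) hg w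
  simpa only [cfc_coe_mul] using hfg u

include hSOT in
lemma sotCfcSubalgebra_eq_top : sotCfcSubalgebra l H T hH hT = ⊤ :=
  eq_top_iff.2 fun f _ => mem_sotCfcSubalgebra_of_mul_mem hH hT
    (invOneAddSq_mem_sotCfcSubalgebra hH hT hSOT) (surjective_cfc_invOneAddSq hT)
    (range_compEmbedBall_le_sotCfcSubalgebra hH hT hSOT
      (mul_invOneAddSq_mem_range_compEmbedBall f))

end Operators

/-- **The operator-theoretic Kaplansky density theorem (Remark 2.6(ii)).** If a net
`(Hᵢ)` of self-adjoint bounded operators converges strongly to a self-adjoint bounded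
operator `H`, then `(φ(Hᵢ))` converges strongly to `φ(H)` for every bounded continuous
function `φ : ℝ → ℝ`. -/
theorem stmt_18 {𝓗 : Type*} [NormedAddCommGroup 𝓗] [InnerProductSpace ℂ 𝓗]
    [CompleteSpace 𝓗]
    {ι : Type*} (l : Filter ι)
    (H : ι → 𝓗 →L[ℂ] 𝓗) (hsa : ∀ i, IsSelfAdjoint (H i))
    (T : 𝓗 →L[ℂ] 𝓗) (hTsa : IsSelfAdjoint T)
    (hSOT : ∀ v : 𝓗, Tendsto (fun i => (H i) v) l (𝓝 (T v)))
    (φ : ℝ → ℝ) (hφc : Continuous φ) (hφb : ∃ C : ℝ, ∀ x : ℝ, |φ x| ≤ C) :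
    ∀ v : 𝓗, Tendsto (fun i => (cfc φ (H i)) v) l (𝓝 ((cfc φ T) v)) := by
  obtain ⟨C, hC⟩ := hφb
  have hφ : (.ofNormedAddCommGroup φ hφc C hC : ℝ →ᵇ ℝ) ∈ sotCfcSubalgebra l H T hsa hTsa :=
    sotCfcSubalgebra_eq_top hsa hTsa hSOT ▸ Algebra.mem_top
  exact hφ
end
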